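/- arXiv:2307.09903 — 3 statements merged into one kernel-verified Lean document; each statement's English description precedes it below -/
import Mathlib

section
/- In the homotopy category of chain complexes over an additive category, define the homological order |A|_h of a complex A as the supremum of m such that A is homotopy equivalent to a complex supported in degrees ≥ m. If f : A → B and g : B → C are chain maps, then |Cone(g∘f)|_h ≥ min(|Cone(f)|_h, |Cone(g)|_h) − 1. -/
open CategoryTheory Limits

variable {C : Type*} [Category C] [Preadditive C] [HasBinaryBiproducts C]

/-- A biproduct of two zero objects is zero. -/
lemma isZero_biprod' {X Y : C} (hX : IsZero X) (hY : IsZero Y) : IsZero (X ⊞ Y) := by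
  rw [IsZero.iff_id_eq_zero]
  apply biprod.hom_ext
  · exact hX.eq_of_tgt _ _
  · exact hY.eq_of_tgt _ _

/-- A complex `A` is (up to homotopy equivalence) supported in homological degrees `≥ m`:
this is the condition `A ≃ O^h_+(m)` entering the definition of the homological order
`|A|_h = sup { m : A ≃ O^h_+(m) }`. -/
def SupportedGE (A : CochainComplex C ℤ) (m : ℤ) : Prop :=
  ∃ B : CochainComplex C ℤ, (∀ i < m, IsZero (B.X i)) ∧ Nonempty (HomotopyEquiv A B)

open Pretriangulated

/-- Triangle inequality for homological orders of mapping cones: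
`|Cone(g ∘ f)|_h ≥ min(|Cone f|_h, |Cone g|_h) − 1`.  Stated in terms of the defining
condition: if both `Cone f` and `Cone g` are homotopy equivalent to complexes supported in
degrees `≥ m`, then `Cone (f ≫ g)` is homotopy equivalent to a complex supported in
degrees `≥ m − 1`. -/
theorem homOrder_cone_comp {A B D : CochainComplex C ℤ} (f : A ⟶ B) (g : B ⟶ D) (m : ℤ)
    (hf : SupportedGE (CochainComplex.mappingCone f) m)
    (hg : SupportedGE (CochainComplex.mappingCone g) m) :
    SupportedGE (CochainComplex.mappingCone (f ≫ g)) (m - 1) := by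
  obtain ⟨B₁, hB₁, ⟨e₁⟩⟩ := hf
  obtain ⟨B₂, hB₂, ⟨e₂⟩⟩ := hg
  haveI : HasZeroObject C := ⟨B₁.X (m - 1), hB₁ _ (by omega)⟩
  set Q := HomotopyCategory.quotient C (ComplexShape.up ℤ) with hQ
  have hΔ := HomotopyCategory.mappingConeCompTriangleh_distinguished f g
  have hΔ' := inv_rot_of_distTriang _ hΔ
  set T' := (CochainComplex.mappingConeCompTriangleh f g).invRotate with hT'
  let E₁ : Q.obj (CochainComplex.mappingCone f) ≅ Q.obj B₁ :=
    HomotopyCategory.isoOfHomotopyEquiv e₁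
  let E₂ : Q.obj (CochainComplex.mappingCone g) ≅ Q.obj B₂ :=
    HomotopyCategory.isoOfHomotopyEquiv e₂
  let S : Q.obj (B₂⟦(-1 : ℤ)⟧) ≅ (Q.obj B₂)⟦(-1 : ℤ)⟧ := (Q.commShiftIso (-1 : ℤ)).app B₂
  let eObj₁ : T'.obj₁ ≅ Q.obj (B₂⟦(-1 : ℤ)⟧) :=
    (CategoryTheory.shiftFunctor _ (-1 : ℤ)).mapIso E₂ ≪≫ S.symm
  obtain ⟨ψ, hψ⟩ := Q.map_surjective (eObj₁.inv ≫ T'.mor₁ ≫ E₁.hom)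
  have hTΨ := HomotopyCategory.mappingCone_triangleh_distinguished ψ
  have comm : T'.mor₁ ≫ E₁.hom =
      eObj₁.hom ≫ (CochainComplex.mappingCone.triangleh ψ).mor₁ := by
    change T'.mor₁ ≫ E₁.hom = eObj₁.hom ≫ Q.map ψ
    rw [hψ]
    simp
  let iso := isoTriangleOfIso₁₂ T' (CochainComplex.mappingCone.triangleh ψ) hΔ' hTΨ
    eObj₁ E₁ comm
  refine ⟨CochainComplex.mappingCone ψ, fun i hi => ?_,
    ⟨HomotopyCategory.homotopyEquivOfIso (Triangle.π₃.mapIso iso)⟩⟩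
  refine IsZero.of_iso ?_
    (HomologicalComplex.homotopyCofiber.XIsoBiprod ψ i (i + 1) (by simp))
  exact isZero_biprod' (hB₂ _ (by change i + 1 + (-1 : ℤ) < m; omega)) (hB₁ _ (by omega))
end

section
/- The Jones-Wenzl projector p_n in the Temperley-Lieb algebra TL_n over the field C(A) is the unique element satisfying: (i) e_i · p_n = 0 = p_n · e_i for all standard generators e_1, ..., e_{n-1}, and (ii) p_n − 1 lies in the (non-unital) subalgebra generated by e_1, ..., e_{n-1}. Moreover these properties imply p_n is idempotent: p_n · p_n = p_n. -/
open scoped Polynomial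

/-- Uniqueness and idempotency of the Jones-Wenzl projector.  In the Temperley-Lieb algebra
`TL_n` over `ℂ(A)` — a unital algebra generated by `e_1, …, e_{n-1}` subject to the
Temperley-Lieb relations — any two elements `p, p'` satisfying
(i) `e_i · p = 0 = p · e_i` for all `i`, and
(ii) `p − 1` lies in the non-unital subalgebra generated by the `e_i`,
are equal, and such an element is idempotent: `p · p = p`. -/
theorem jones_wenzl_unique_idempotent
    (R : Type*) [Ring R] [Algebra (RatFunc ℂ) R]
    (n : ℕ) (e : ℕ → R)
    (δ : RatFunc ℂ) (hδ : δ = -(RatFunc.X ^ 2) - (RatFunc.X)⁻¹ ^ 2)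
    -- Temperley-Lieb relations:
    (hsq : ∀ i, i < n - 1 → e i * e i = δ • e i)
    (hbraid : ∀ i, i + 1 < n - 1 → e i * e (i + 1) * e i = e i ∧
      e (i + 1) * e i * e (i + 1) = e (i + 1))
    (hcomm : ∀ i j, i < n - 1 → j < n - 1 → 2 ≤ Int.natAbs ((i : ℤ) - j) →
      e i * e j = e j * e i)
    -- the generating set
    (S : Set R) (hS : S = {x | ∃ i, i < n - 1 ∧ x = e i})
    (p p' : R)
    (hp0 : ∀ i, i < n - 1 → e i * p = 0 ∧ p * e i = 0)
    (hp1 : p - 1 ∈ NonUnitalAlgebra.adjoin (RatFunc ℂ) S)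
    (hp0' : ∀ i, i < n - 1 → e i * p' = 0 ∧ p' * e i = 0)
    (hp1' : p' - 1 ∈ NonUnitalAlgebra.adjoin (RatFunc ℂ) S) :
    p = p' ∧ p * p = p := by
  have key : ∀ q : R, (∀ i, i < n - 1 → e i * q = 0) →
      ∀ x ∈ NonUnitalAlgebra.adjoin (RatFunc ℂ) S, x * q = 0 := by
    intro q hq x hx
    induction hx using NonUnitalAlgebra.adjoin_induction with
    | mem x hxS =>
        rw [hS] at hxS
        obtain ⟨i, hi, rfl⟩ := hxS
        exact hq i hi
    | add x y _ _ hx hy => rw [add_mul, hx, hy, add_zero]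
    | zero => rw [zero_mul]
    | mul x y _ _ hx hy => rw [mul_assoc, hy, mul_zero]
    | smul r x _ hx => rw [smul_mul_assoc, hx, smul_zero]
  have key' : ∀ q : R, (∀ i, i < n - 1 → q * e i = 0) →
      ∀ x ∈ NonUnitalAlgebra.adjoin (RatFunc ℂ) S, q * x = 0 := by
    intro q hq x hx
    induction hx using NonUnitalAlgebra.adjoin_induction with
    | mem x hxS =>
        rw [hS] at hxS
        obtain ⟨i, hi, rfl⟩ := hxS
        exact hq i hi
    | add x y _ _ hx hy => rw [mul_add, hx, hy, add_zero]
    | zero => rw [mul_zero]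
    | mul x y _ _ hx hy => rw [← mul_assoc, hx, zero_mul]
    | smul r x _ hx => rw [mul_smul_comm, hx, smul_zero]
  have h1 : (p' - 1) * p = 0 :=
    key p (fun i hi => (hp0 i hi).1) _ hp1'
  have h2 : p * (p' - 1) = 0 :=
    key' p (fun i hi => (hp0 i hi).2) _ hp1'
  have h3 : p' * (p - 1) = 0 :=
    key' p' (fun i hi => (hp0' i hi).2) _ hp1
  have h4 : p * (p - 1) = 0 :=
    key' p (fun i hi => (hp0 i hi).2) _ hp1
  have hpp : p' * p = p := by
    have := h1; rw [sub_mul, one_mul, sub_eq_zero] at this; exact this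
  have hpp' : p' * p = p' := by
    have := h3; rw [mul_sub, mul_one, sub_eq_zero] at this; exact this
  have hsq2 : p * p = p := by
    have := h4; rw [mul_sub, mul_one, sub_eq_zero] at this; exact this
  exact ⟨hpp ▸ hpp', hsq2⟩
end

section
/- Let v_8 := 8Λ(π/4), where Λ is the Lobachevsky function. Then 8Λ(π/4) = −8∫_0^{π/4} log(2 sin t) dt > 0, i.e., the volume of the regular ideal octahedron is positive. -/
open Real

noncomputable section

open MeasureTheory intervalIntegral Set

lemma aux_pi4_nonneg : (0:ℝ) ≤ π / 4 := by positivity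

lemma aux_pi4_le_one : (π:ℝ) / 4 ≤ 1 := by linarith [Real.pi_le_four]

/-- `-log` is interval integrable on `[0, π/4]`. -/
lemma aux_intInt_neg_log : IntervalIntegrable (fun t : ℝ => -Real.log t) volume 0 (π / 4) := by
  apply intervalIntegrable_deriv_of_nonneg (g := fun x : ℝ => x - x * Real.log x)
  · exact (continuous_id.sub Real.continuous_mul_log).continuousOn
  · intro x hx
    rw [min_eq_left aux_pi4_nonneg, max_eq_right aux_pi4_nonneg] at hx
    have h := (hasDerivAt_id x).sub (Real.hasDerivAt_mul_log hx.1.ne')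
    exact h.congr_deriv (by ring)
  · intro x hx
    rw [min_eq_left aux_pi4_nonneg, max_eq_right aux_pi4_nonneg] at hx
    have : Real.log x ≤ 0 :=
      Real.log_nonpos hx.1.le (hx.2.le.trans aux_pi4_le_one)
    linarith

lemma aux_intInt_log : IntervalIntegrable Real.log volume 0 (π / 4) := by
  have h := aux_intInt_neg_log.neg
  convert h using 1
  ext t
  simp

/-- FTC computation of `∫₀^{π/4} log t dt`. -/
lemma aux_integral_log : ∫ t in (0:ℝ)..(π/4), Real.log t = π/4 * Real.log (π/4) - π/4 := by
  have h := intervalIntegral.integral_eq_sub_of_hasDeriv_right_of_le aux_pi4_nonneg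
      (f := fun x : ℝ => x * Real.log x - x) (f' := Real.log)
      ((Real.continuous_mul_log.sub continuous_id).continuousOn)
      (fun x hx => by
        have h := (Real.hasDerivAt_mul_log hx.1.ne').sub (hasDerivAt_id x)
        have h2 : Real.log x + 1 - 1 = Real.log x := by ring
        rw [h2] at h
        exact h.hasDerivWithinAt)
      aux_intInt_log
  simp only [Real.log_zero, mul_zero, zero_mul, sub_zero, zero_sub, sub_neg_eq_add,
    add_zero] at h
  linarith [h]

lemma aux_bounds {t : ℝ} (ht : t ∈ Set.Ioc (0:ℝ) (π/4)) :
    Real.log t ≤ Real.log (2 * Real.sin t) ∧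
      Real.log (2 * Real.sin t) ≤ Real.log 2 + Real.log t := by
  have hπ := Real.pi_pos
  have ht0 : 0 < t := ht.1
  have ht2 : t ≤ π / 2 := by linarith [ht.2]
  have hsin_lb : 2 / π * t ≤ Real.sin t := Real.mul_le_sin ht0.le ht2
  have hsin_pos : 0 < Real.sin t := lt_of_lt_of_le (by positivity) hsin_lb
  constructor
  · calc Real.log t ≤ Real.log (2 * (2 / π * t)) := by
          apply Real.log_le_log ht0
          rw [show 2*(2/π*t) = 4*t/π by ring, le_div_iff₀ hπ]
          nlinarith [Real.pi_le_four, mul_nonneg (sub_nonneg.2 Real.pi_le_four) ht0.le]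
        _ ≤ Real.log (2 * Real.sin t) := by
          apply Real.log_le_log (by positivity)
          nlinarith
  · rw [← Real.log_mul two_ne_zero ht0.ne']
    apply Real.log_le_log (by positivity)
    nlinarith [Real.sin_lt ht0]

/-- Interval integrability of `log (2 sin t)` on `[0, π/4]`. -/
lemma aux_intInt_log_sin :
    IntervalIntegrable (fun t : ℝ => Real.log (2 * Real.sin t)) volume 0 (π / 4) := by
  rw [intervalIntegrable_iff_integrableOn_Ioc_of_le aux_pi4_nonneg]
  have hlog : IntegrableOn Real.log (Set.Ioc (0:ℝ) (π/4)) volume := aux_intInt_log.1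
  have hg : IntegrableOn (fun t : ℝ => |Real.log t| + 1) (Set.Ioc (0:ℝ) (π/4)) volume := by
    exact hlog.abs.add (integrableOn_const measure_Ioc_lt_top.ne)
  apply hg.integrable.mono
  · exact (Real.measurable_log.comp
      ((measurable_const.mul Real.measurable_sin))).aestronglyMeasurable
  · rw [ae_restrict_iff' measurableSet_Ioc]
    filter_upwards with t ht
    obtain ⟨hlb, hub⟩ := aux_bounds ht
    have hlog2 : Real.log 2 ≤ 1 := by
      have := Real.log_le_sub_one_of_pos (two_pos (α := ℝ))
      linarith
    simp only [Real.norm_eq_abs]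
    rw [abs_of_nonneg (by positivity : (0:ℝ) ≤ |Real.log t| + 1)]
    rw [abs_le]
    constructor
    · have := neg_abs_le (Real.log t); linarith
    · have := le_abs_self (Real.log t); linarith

/-- The key integral bound: `∫₀^{π/4} log (2 sin t) dt < 0`. -/
lemma aux_integral_neg : ∫ t in (0:ℝ)..(π/4), Real.log (2 * Real.sin t) < 0 := by
  have hπ := Real.pi_pos
  have hgint : IntervalIntegrable (fun t : ℝ => Real.log 2 + Real.log t) volume 0 (π/4) :=
    (intervalIntegrable_const (c := Real.log 2)).add aux_intInt_log
  have hmono : ∫ t in (0:ℝ)..(π/4), Real.log (2 * Real.sin t)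
      ≤ ∫ t in (0:ℝ)..(π/4), (Real.log 2 + Real.log t) := by
    apply intervalIntegral.integral_mono_on aux_pi4_nonneg aux_intInt_log_sin hgint
    intro t ht
    rcases eq_or_lt_of_le ht.1 with h | h
    · subst h
      simp [Real.log_nonneg one_le_two]
    · exact (aux_bounds ⟨h, ht.2⟩).2
  have hcalc : ∫ t in (0:ℝ)..(π/4), (Real.log 2 + Real.log t)
      = π/4 * Real.log 2 + (π/4 * Real.log (π/4) - π/4) := by
    rw [intervalIntegral.integral_add (intervalIntegrable_const (c := Real.log 2)) aux_intInt_log,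
      aux_integral_log, intervalIntegral.integral_const]
    simp [smul_eq_mul]
  have hlogsum : Real.log 2 + Real.log (π/4) = Real.log (π/2) := by
    rw [← Real.log_mul two_ne_zero (by positivity)]
    congr 1
    ring
  have hlt : Real.log (π/2) < 1 := by
    rw [Real.log_lt_iff_lt_exp (by positivity)]
    have h1 := Real.exp_one_gt_d9
    have h2 := Real.pi_lt_d2
    linarith
  nlinarith [hmono, hcalc]

/-- The Lobachevsky function `Λ(θ) = −∫₀^θ log|2 sin t| dt`. -/
def lobachevsky (θ : ℝ) : ℝ := -∫ t in (0 : ℝ)..θ, Real.log |2 * Real.sin t|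

/-- The volume of the regular ideal octahedron `v₈ = 8Λ(π/4)` equals
`−8∫₀^{π/4} log(2 sin t) dt`, and it is positive. -/
theorem octahedron_volume_pos :
    8 * lobachevsky (Real.pi / 4) =
      -8 * ∫ t in (0 : ℝ)..(Real.pi / 4), Real.log (2 * Real.sin t) ∧
    0 < 8 * lobachevsky (Real.pi / 4) := by
  have hπ := Real.pi_pos
  have habs : (∫ t in (0:ℝ)..(π/4), Real.log |2 * Real.sin t|)
      = ∫ t in (0:ℝ)..(π/4), Real.log (2 * Real.sin t) := by
    apply intervalIntegral.integral_congr
    intro t ht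
    rw [Set.uIcc_of_le aux_pi4_nonneg] at ht
    have hsin : 0 ≤ Real.sin t :=
      Real.sin_nonneg_of_nonneg_of_le_pi ht.1 (ht.2.trans (by linarith))
    show Real.log |2 * Real.sin t| = Real.log (2 * Real.sin t)
    rw [abs_of_nonneg (by positivity)]
  have heq : lobachevsky (π/4) = -∫ t in (0:ℝ)..(π/4), Real.log (2 * Real.sin t) := by
    rw [lobachevsky, habs]
  constructor
  · rw [heq]; ring
  · rw [heq]
    have := aux_integral_neg
    linarith
end
end
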